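/- (Probabilistic form of Lemma 1 of Kusner et al., as used in the paper.) Let a structural causal model be given over a finite variable set V with well-founded parent relation R, structural functions f, valuation val, and additionally a probability measure P on the space of contexts V → E (with D a measurable space and each map u ↦ val f[A←a] u Ŷ measurable). Let Ŷ : V be a predictor variable and A ⊆ V a set of protected attributes such that no element of A is an ancestor-or-equal of Ŷ (for every X ∈ A, ¬ Relation.ReflTransGen R X Ŷ). Then for any two assignments a, a' : A → D, the pushforward measure of P under the map u ↦ val f[A←a] u Ŷ equals the pushforward measure of P under u ↦ val f[A←a'] u Ŷ; that is, the counterfactual distributions P(Ŷ_{A←a}) and P(Ŷ_{A←a'}) coincide, so Ŷ is counterfactually fair. -/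

import Mathlib

/-!
Intervening on `A` only changes structural functions at variables in `A`, and the value of
`Ŷ` depends only on the structural functions at its ancestors-or-self. When no element of `A`
is among them, both `do(A = a)` and `do(A = a')` leave `Ŷ` equal, context by context, to its
value in the unintervened model, so the two pushforwards of `P` are pushforwards along the
same map.
-/

/-- The valuation of a structural causal model: each variable's value is computed
from its exogenous input and the (recursively computed) values of its parents,
by well-founded recursion on the parent relation `R`. -/
def val {V Ex D : Type*} (R : V → V → Prop) (hR : WellFounded R)
    (f : ∀ v : V, Ex → (∀ w : V, R w v → D) → D) (u : V → Ex) : V → D :=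
  hR.fix fun v ih => f v (u v) fun w hw => ih w hw

open Classical in
/-- The intervention `do(A = a)`: the structural function of each `X ∈ A` is replaced
by the constant function returning `a X`; all other structural functions are unchanged. -/
noncomputable def interveneSet {V Ex D : Type*} (R : V → V → Prop)
    (f : ∀ v : V, Ex → (∀ w : V, R w v → D) → D) (A : Set V) (a : A → D) :
    ∀ v : V, Ex → (∀ w : V, R w v → D) → D :=
  fun v => if h : v ∈ A then fun _ _ => a ⟨v, h⟩ else f v

section Valuation

variable {V Ex D : Type*} {R : V → V → Prop} (hR : WellFounded R)

theorem val_eq (f : ∀ v : V, Ex → (∀ w : V, R w v → D) → D) (u : V → Ex) (v : V) :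
    val R hR f u v = f v (u v) fun w _ => val R hR f u w :=
  hR.fix_eq _ v

theorem val_congr_of_forall_ancestor {f g : ∀ v : V, Ex → (∀ w : V, R w v → D) → D}
    (u : V → Ex) {w : V} (hfg : ∀ v, Relation.ReflTransGen R v w → f v = g v) :
    val R hR f u w = val R hR g u w := by
  induction w using hR.induction with
  | _ w ih =>
    rw [val_eq, val_eq, hfg w .refl]
    congr 1
    funext v hv
    exact ih v hv fun x hx => hfg x (hx.tail hv)

end Valuation

theorem interveneSet_of_notMem {V Ex D : Type*} (R : V → V → Prop)
    (f : ∀ v : V, Ex → (∀ w : V, R w v → D) → D) {A : Set V} (a : A → D) {v : V}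
    (hv : v ∉ A) : interveneSet R f A a v = f v :=
  dif_neg hv

theorem val_interveneSet_of_not_ancestor {V Ex D : Type*} {R : V → V → Prop}
    (hR : WellFounded R) (f : ∀ v : V, Ex → (∀ w : V, R w v → D) → D) {A : Set V}
    (a : A → D) (u : V → Ex) {w : V} (hA : ∀ X ∈ A, ¬ Relation.ReflTransGen R X w) :
    val R hR (interveneSet R f A a) u w = val R hR f u w :=
  val_congr_of_forall_ancestor hR u fun v hv =>
    interveneSet_of_notMem R f a fun hvA => hA v hvA hv

open MeasureTheory in
theorem counterfactual_fairness_of_not_descendant_general {V Ex D : Type*}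
    [MeasurableSpace Ex] [MeasurableSpace D]
    (R : V → V → Prop) (hR : WellFounded R)
    (f : ∀ v : V, Ex → (∀ w : V, R w v → D) → D)
    (P : Measure (V → Ex))
    (Yhat : V) (A : Set V)
    (hA : ∀ X ∈ A, ¬ Relation.ReflTransGen R X Yhat)
    (a a' : A → D) :
    P.map (fun u : V → Ex => val R hR (interveneSet R f A a) u Yhat) =
      P.map (fun u : V → Ex => val R hR (interveneSet R f A a') u Yhat) := by
  have hY : ∀ b : A → D, (fun u => val R hR (interveneSet R f A b) u Yhat) =
      fun u => val R hR f u Yhat := fun b =>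
    funext fun u => val_interveneSet_of_not_ancestor hR f b u hA
  rw [hY a, hY a']

open MeasureTheory in
/-- (Probabilistic form of Lemma 1 of Kusner et al.) If no protected attribute in `A`
is an ancestor-or-equal of the predictor `Ŷ`, then the counterfactual distributions of
`Ŷ` under `do(A = a)` and `do(A = a')` — the pushforwards of the context distribution
`P` under the corresponding valuations — coincide: the predictor is counterfactually
fair. -/
theorem counterfactual_fairness_of_not_descendant {V Ex D : Type*} [Finite V]
    [MeasurableSpace Ex] [MeasurableSpace D]
    (R : V → V → Prop) (hR : WellFounded R)
    (f : ∀ v : V, Ex → (∀ w : V, R w v → D) → D)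
    (P : Measure (V → Ex)) [IsProbabilityMeasure P]
    (Yhat : V) (A : Set V)
    (hmeas : ∀ a : A → D,
      Measurable fun u : V → Ex => val R hR (interveneSet R f A a) u Yhat)
    (hA : ∀ X ∈ A, ¬ Relation.ReflTransGen R X Yhat)
    (a a' : A → D) :
    P.map (fun u : V → Ex => val R hR (interveneSet R f A a) u Yhat) =
      P.map (fun u : V → Ex => val R hR (interveneSet R f A a') u Yhat) :=
  counterfactual_fairness_of_not_descendant_general R hR f P Yhat A hA a a'
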